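/- arXiv:1904.07329 — 2 statements merged into one kernel-verified Lean document; each statement's English description precedes it below -/
import Mathlib

section
/- Let L be a positive integer, let P ∈ ℂ^{L×L} be Hermitian positive semidefinite, let q ∈ ℂ^L, let γ ≥ 0, and define f̄(y) = Re(y†(P + γI)y − q†y − y†q). Let u ∈ S^L, let Ψ be the L×L real diagonal matrix with nonnegative diagonal entries ψ_1,…,ψ_L, and set x̄ = (I + Ψ)u. Then f̄(x̄) − f̄(u) ≥ 2γ·Σ_l ψ_l + Re(u†(ΨP + PΨ)u) − 2·Re(q† Ψ u). -/
open Matrix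
open scoped ComplexOrder

/-!
Write `x̄ = u + v` with `v = Ψu` and `R = P + γI`. Expanding the quadratic,
`f̄(u + v) − f̄(u) = Re(u†Rv + v†Ru) + Re(v†Rv) − 2 Re(q†v)`. The middle term is `≥ 0` because
`R` is positive semidefinite. Since `Ψ` is Hermitian, `Re(u†Pv + v†Pu) = Re(u†(ΨP + PΨ)u)`, and
since `|u_l| = 1`, `u†v = Σ_l ψ_l`, which turns the `γ`-part of the cross term into `2γ Σ_l ψ_l`.
-/

/-- The quadratic cost `f̄(y) = Re(y† R y − q† y − y† q)`. -/
noncomputable def fbar {L : ℕ} (R : Matrix (Fin L) (Fin L) ℂ) (q : Fin L → ℂ)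
    (y : Fin L → ℂ) : ℝ :=
  (star y ⬝ᵥ R.mulVec y - star q ⬝ᵥ y - star y ⬝ᵥ q).re

namespace Matrix

variable {n : Type*} [Fintype n]

lemma re_star_dotProduct_comm (v w : n → ℂ) : (star v ⬝ᵥ w).re = (star w ⬝ᵥ v).re := by
  rw [star_dotProduct, Complex.star_def, Complex.conj_re]

lemma IsHermitian.star_mulVec_dotProduct {A : Matrix n n ℂ} (hA : A.IsHermitian)
    (v w : n → ℂ) : star (A *ᵥ v) ⬝ᵥ w = star v ⬝ᵥ A *ᵥ w := by
  rw [star_mulVec, hA.eq, dotProduct_mulVec]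

lemma IsHermitian.dotProduct_mul_add_mul_mulVec {A B : Matrix n n ℂ} (hA : A.IsHermitian)
    (u : n → ℂ) :
    star u ⬝ᵥ (A * B + B * A) *ᵥ u = star (A *ᵥ u) ⬝ᵥ B *ᵥ u + star u ⬝ᵥ B *ᵥ (A *ᵥ u) := by
  rw [add_mulVec, dotProduct_add, ← mulVec_mulVec, ← mulVec_mulVec,
    hA.star_mulVec_dotProduct]

lemma dotProduct_add_smul_one_mulVec [DecidableEq n] (P : Matrix n n ℂ) (c : ℂ)
    (v w : n → ℂ) : v ⬝ᵥ (P + c • 1) *ᵥ w = v ⬝ᵥ P *ᵥ w + c * (v ⬝ᵥ w) := by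
  rw [add_mulVec, smul_mulVec, one_mulVec, dotProduct_add, dotProduct_smul, smul_eq_mul]

lemma star_dotProduct_diagonal_mulVec_of_norm_eq_one [DecidableEq n] (ψ : n → ℝ)
    {u : n → ℂ} (hu : ∀ l, ‖u l‖ = 1) :
    star u ⬝ᵥ diagonal (fun l => (ψ l : ℂ)) *ᵥ u = ((∑ l, ψ l : ℝ) : ℂ) := by
  push_cast
  refine Finset.sum_congr rfl fun l _ => ?_
  rw [mulVec_diagonal, Pi.star_apply, mul_left_comm, Complex.star_def, Complex.conj_mul',
    hu l]
  simp

end Matrix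

lemma fbar_add_sub_fbar {L : ℕ} (R : Matrix (Fin L) (Fin L) ℂ) (q u v : Fin L → ℂ) :
    fbar R q (u + v) - fbar R q u
      = (star u ⬝ᵥ R *ᵥ v + star v ⬝ᵥ R *ᵥ u).re + (star v ⬝ᵥ R *ᵥ v).re
        - 2 * (star q ⬝ᵥ v).re := by
  simp only [fbar, mulVec_add, star_add, dotProduct_add, add_dotProduct, Complex.add_re,
    Complex.sub_re, re_star_dotProduct_comm v q]
  ring

theorem stmt9_general (L : ℕ) (P : Matrix (Fin L) (Fin L) ℂ)
    (hP : P.PosSemidef) (q : Fin L → ℂ) (γ : ℝ) (hγ : 0 ≤ γ)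
    (u : Fin L → ℂ) (hu : ∀ l, ‖u l‖ = 1)
    (ψ : Fin L → ℝ)
    (Ψ : Matrix (Fin L) (Fin L) ℂ)
    (hΨ : Ψ = Matrix.diagonal fun l => ((ψ l : ℝ) : ℂ))
    (xb : Fin L → ℂ)
    (hxb : xb = ((1 : Matrix (Fin L) (Fin L) ℂ) + Ψ).mulVec u) :
    2 * γ * (∑ l, ψ l) + (star u ⬝ᵥ (Ψ * P + P * Ψ).mulVec u).re
        - 2 * (star q ⬝ᵥ Ψ.mulVec u).re
      ≤ fbar (P + (γ : ℂ) • (1 : Matrix (Fin L) (Fin L) ℂ)) q xb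
        - fbar (P + (γ : ℂ) • (1 : Matrix (Fin L) (Fin L) ℂ)) q u := by
  subst hxb
  have hR : (P + (γ : ℂ) • 1).PosSemidef :=
    hP.add (PosSemidef.one.smul (Complex.zero_le_real.mpr hγ))
  have hΨH : Ψ.IsHermitian := by
    rw [hΨ]
    exact isHermitian_diagonal_of_self_adjoint _ (by ext l; simp)
  have huv : star u ⬝ᵥ Ψ *ᵥ u = ((∑ l, ψ l : ℝ) : ℂ) := by
    rw [hΨ]
    exact star_dotProduct_diagonal_mulVec_of_norm_eq_one ψ hu
  have hcross : (star u ⬝ᵥ (P + (γ : ℂ) • 1) *ᵥ (Ψ *ᵥ u)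
        + star (Ψ *ᵥ u) ⬝ᵥ (P + (γ : ℂ) • 1) *ᵥ u).re
      = (star u ⬝ᵥ (Ψ * P + P * Ψ) *ᵥ u).re + 2 * γ * ∑ l, ψ l := by
    rw [hΨH.dotProduct_mul_add_mul_mulVec, dotProduct_add_smul_one_mulVec,
      dotProduct_add_smul_one_mulVec]
    simp only [Complex.add_re, Complex.re_ofReal_mul, re_star_dotProduct_comm (Ψ *ᵥ u) u, huv,
      Complex.ofReal_re]
    ring
  have hquad : 0 ≤ (star (Ψ *ᵥ u) ⬝ᵥ (P + (γ : ℂ) • 1) *ᵥ (Ψ *ᵥ u)).re :=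
    (Complex.nonneg_iff.mp (hR.dotProduct_mulVec_nonneg _)).1
  rw [add_mulVec 1, one_mulVec, fbar_add_sub_fbar, hcross]
  linarith

/-- With `P` Hermitian PSD, `γ ≥ 0`, `u ∈ S^L`, `Ψ` real diagonal
with nonnegative entries `ψ_l`, and `x̄ = (I + Ψ)u`:
`f̄(x̄) − f̄(u) ≥ 2γ·Σ_l ψ_l + Re(u†(ΨP + PΨ)u) − 2·Re(q† Ψ u)`. -/
theorem stmt9 (L : ℕ) (hL : 0 < L) (P : Matrix (Fin L) (Fin L) ℂ)
    (hP : P.PosSemidef) (q : Fin L → ℂ) (γ : ℝ) (hγ : 0 ≤ γ)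
    (u : Fin L → ℂ) (hu : ∀ l, ‖u l‖ = 1)
    (ψ : Fin L → ℝ) (hψ : ∀ l, 0 ≤ ψ l)
    (Ψ : Matrix (Fin L) (Fin L) ℂ)
    (hΨ : Ψ = Matrix.diagonal fun l => ((ψ l : ℝ) : ℂ))
    (xb : Fin L → ℂ)
    (hxb : xb = ((1 : Matrix (Fin L) (Fin L) ℂ) + Ψ).mulVec u) :
    2 * γ * (∑ l, ψ l) + (star u ⬝ᵥ (Ψ * P + P * Ψ).mulVec u).re
        - 2 * (star q ⬝ᵥ Ψ.mulVec u).re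
      ≤ fbar (P + (γ : ℂ) • (1 : Matrix (Fin L) (Fin L) ℂ)) q xb
        - fbar (P + (γ : ℂ) • (1 : Matrix (Fin L) (Fin L) ℂ)) q u :=
  stmt9_general L P hP q γ hγ u hu ψ Ψ hΨ xb hxb
end

section
/- (One-step monotonicity of PDR) Let L be a positive integer, let P ∈ ℂ^{L×L} be Hermitian positive semidefinite with largest eigenvalue λ_P, let q ∈ ℂ^L, and let γ ∈ ℝ satisfy γ ≥ (L/8)·λ_P + ‖q‖₂. Define f̄(y) = Re(y†(P + γI)y − q†y − y†q) and w(x) = 2(P + γI)x − 2q. Assume λ_P + γ > 0 and that the step size β satisfies 0 < β < 1/(λ_P + γ) (note λ_P + γ is the largest eigenvalue of P + γI). Then for every x ∈ S^L, the PDR update x_+ = R(x + β·P_x(−w(x))) is well defined, lies in S^L, and satisfies f̄(x_+) ≤ f̄(x). -/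
open Matrix
open scoped ComplexOrder

/-- Projection onto the tangent space of the complex circle manifold at `z`:
`(P_z(w))_l = w_l − Re(conj(w_l)·z_l)·z_l`. -/
noncomputable def proj {L : ℕ} (z w : Fin L → ℂ) : Fin L → ℂ :=
  fun l => w l - ((((starRingEnd ℂ) (w l)) * z l).re : ℂ) * z l

/-- Retraction onto the complex circle manifold: `(R(w))_l = w_l / |w_l|`. -/
noncomputable def retr {L : ℕ} (w : Fin L → ℂ) : Fin L → ℂ :=
  fun l => w l / ((‖w l‖ : ℝ) : ℂ)

/-!
With `R = P + γI`, `w = 2Rx - 2q` and `d = x₊ - x`, the cost is quadratic, so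
`f̄(x₊) - f̄(x) = Re(d†Rd) + Re(d†w) ≤ ∑ₗ ((λ_P + γ)|d_l|² + Re(conj d_l · w_l))`,
and it suffices that every coordinate term is nonpositive. Viewing `ℂ` as the Euclidean plane,
each coordinate of `x₊` is a retracted tangent step on the unit circle: with `v = P_x(-w)` and
`r_l = |x_l + β v_l| ≥ 1` one gets `|d_l|² = 2(1 - 1/r_l)`, and the coordinate term is `≤ 0` as
soon as `β(λ_P + γ) ≤ 1` and `Re(conj w_l · x_l) ≥ 0`. The last condition is where the size of `γ`
enters: testing `0 ≤ P ≤ λ_P I` against `x ± √L x_l e_l` gives `Re(conj x_l · (Px)_l) ≥ -L λ_P / 8`.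
-/

open scoped InnerProductSpace MatrixOrder

section TangentStep

variable {E : Type*} [NormedAddCommGroup E] [InnerProductSpace ℝ E]

lemma inner_sub_inner_smul_self_eq_zero {a : E} (ha : ‖a‖ = 1) (g : E) :
    ⟪g - ⟪g, a⟫_ℝ • a, a⟫_ℝ = 0 := by
  rw [inner_sub_left, real_inner_smul_left, real_inner_self_eq_norm_sq, ha]
  ring

lemma norm_add_smul_sq_of_inner_eq_zero {a t : E} (ha : ‖a‖ = 1) (hta : ⟪t, a⟫_ℝ = 0) (β : ℝ) :
    ‖a + β • t‖ ^ 2 = 1 + β ^ 2 * ‖t‖ ^ 2 := by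
  rw [norm_add_sq_real, real_inner_smul_right, real_inner_comm, hta, norm_smul,
    Real.norm_eq_abs, mul_pow, sq_abs, ha]
  ring

lemma one_le_norm_add_smul_of_inner_eq_zero {a t : E} (ha : ‖a‖ = 1) (hta : ⟪t, a⟫_ℝ = 0)
    (β : ℝ) : 1 ≤ ‖a + β • t‖ := by
  have h := norm_add_smul_sq_of_inner_eq_zero ha hta β
  nlinarith [norm_nonneg (a + β • t), sq_nonneg (β * ‖t‖)]

theorem mul_norm_retraction_sub_sq_le_inner {a g : E} (ha : ‖a‖ = 1) (hga : ⟪g, a⟫_ℝ ≤ 0)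
    {β k : ℝ} (hβ : 0 < β) (hβk : β * k ≤ 1) :
    k * ‖‖a + β • (g - ⟪g, a⟫_ℝ • a)‖⁻¹ • (a + β • (g - ⟪g, a⟫_ℝ • a)) - a‖ ^ 2 ≤
      ⟪‖a + β • (g - ⟪g, a⟫_ℝ • a)‖⁻¹ • (a + β • (g - ⟪g, a⟫_ℝ • a)) - a, g⟫_ℝ := by
  set c := ⟪g, a⟫_ℝ
  set t := g - c • a with ht
  have hta : ⟪t, a⟫_ℝ = 0 := inner_sub_inner_smul_self_eq_zero ha g
  set u := a + β • t
  set r := ‖u‖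
  have hr2 : r ^ 2 = 1 + β ^ 2 * ‖t‖ ^ 2 := norm_add_smul_sq_of_inner_eq_zero ha hta β
  have hr1 : 1 ≤ r := one_le_norm_add_smul_of_inner_eq_zero ha hta β
  have hua : ⟪u, a⟫_ℝ = 1 := by
    rw [inner_add_left, real_inner_smul_left, hta, real_inner_self_eq_norm_sq, ha]; ring
  have hug : ⟪u, g⟫_ℝ = c + β * ‖t‖ ^ 2 := by
    have hg : g = t + c • a := by rw [ht, sub_add_cancel]
    rw [hg, inner_add_left, real_inner_smul_left, inner_add_right, inner_add_right,
      real_inner_smul_right, real_inner_smul_right, hta, real_inner_comm t a, hta,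
      real_inner_self_eq_norm_sq, real_inner_self_eq_norm_sq, ha]
    ring
  have hr0 : 0 < r := by linarith
  have hd : ‖r⁻¹ • u - a‖ ^ 2 = 2 * (r - 1) / r := by
    rw [norm_sub_sq_real, norm_smul, norm_inv, norm_norm, inv_mul_cancel₀ hr0.ne',
      real_inner_smul_left, hua, ha]
    field_simp
    ring
  have hdg : ⟪r⁻¹ • u - a, g⟫_ℝ = (β * ‖t‖ ^ 2 - c * (r - 1)) / r := by
    rw [inner_sub_left, real_inner_smul_left, hug, real_inner_comm]
    field_simp
    ring
  rw [hd, hdg, mul_div_assoc', div_le_div_iff_of_pos_right hr0]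
  nlinarith [mul_nonneg (mul_nonneg hβ.le (neg_nonneg.mpr hga)) (sub_nonneg.mpr hr1),
    mul_nonneg (sub_nonneg.mpr hr1) (sub_nonneg.mpr hβk)]

end TangentStep

namespace Matrix

variable {n : Type*}

lemma IsHermitian.add_ofReal_smul_one [DecidableEq n] {A : Matrix n n ℂ} (hA : A.IsHermitian)
    (γ : ℝ) : (A + (γ : ℂ) • 1).IsHermitian :=
  hA.add (by simp [IsHermitian, conjTranspose_smul])

variable [Fintype n]

lemma re_star_dotProduct (a b : n → ℂ) : (star a ⬝ᵥ b).re = ∑ i, ⟪a i, b i⟫_ℝ := by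
  simp only [dotProduct, Complex.re_sum, Pi.star_apply, Complex.inner, Complex.star_def, mul_comm]

lemma re_star_dotProduct_self (a : n → ℂ) : (star a ⬝ᵥ a).re = ∑ i, ‖a i‖ ^ 2 := by
  simp only [re_star_dotProduct, real_inner_self_eq_norm_sq]

lemma IsHermitian.re_star_dotProduct_mulVec_comm {A : Matrix n n ℂ} (hA : A.IsHermitian)
    (a b : n → ℂ) : (star a ⬝ᵥ A *ᵥ b).re = (star b ⬝ᵥ A *ᵥ a).re := by
  rw [← Complex.conj_re, ← Complex.star_def, star_dotProduct, star_mulVec, hA.eq,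
    ← dotProduct_mulVec, star_star]

lemma IsHermitian.re_dotProduct_mulVec_le_of_eigenvalues_le [DecidableEq n] {A : Matrix n n ℂ}
    (hA : A.IsHermitian) {lam : ℝ} (hub : ∀ i, hA.eigenvalues i ≤ lam) (y : n → ℂ) :
    (star y ⬝ᵥ A *ᵥ y).re ≤ lam * (star y ⬝ᵥ y).re := by
  have hle : A ≤ algebraMap ℝ _ lam := le_algebraMap_of_spectrum_le (fun μ hμ => by
    obtain ⟨i, rfl⟩ := (hA.spectrum_real_eq_range_eigenvalues ▸ hμ : μ ∈ Set.range _)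
    exact hub i)
  have h := (Complex.le_def.mp ((le_iff.mp hle).dotProduct_mulVec_nonneg y)).1
  simpa [sub_mulVec, Algebra.algebraMap_eq_smul_one, smul_mulVec, dotProduct_smul] using h

lemma PosSemidef.neg_mul_le_four_mul_re {A : Matrix n n ℂ} (hA : A.PosSemidef) {lam : ℝ}
    (hub : ∀ y, (star y ⬝ᵥ A *ᵥ y).re ≤ lam * (star y ⬝ᵥ y).re) (a b : n → ℂ) :
    -(lam * (star (a - b) ⬝ᵥ (a - b)).re) ≤ 4 * (star b ⬝ᵥ A *ᵥ a).re := by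
  have hplus := (Complex.le_def.mp (hA.dotProduct_mulVec_nonneg (a + b))).1
  have hminus := hub (a - b)
  have hcomm := hA.isHermitian.re_star_dotProduct_mulVec_comm a b
  simp only [star_add, star_sub, mulVec_add, mulVec_sub, add_dotProduct, dotProduct_add,
    sub_dotProduct, dotProduct_sub, Complex.add_re, Complex.sub_re, Complex.zero_re]
    at hplus hminus hcomm ⊢
  linarith

lemma PosSemidef.neg_card_div_eight_mul_le_inner {A : Matrix n n ℂ} (hA : A.PosSemidef)
    {lam : ℝ} (hub : ∀ y, (star y ⬝ᵥ A *ᵥ y).re ≤ lam * (star y ⬝ᵥ y).re) {x : n → ℂ}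
    (hx : ∀ i, ‖x i‖ = 1) (l : n) :
    -(Fintype.card n / 8 * lam) ≤ ⟪(A *ᵥ x) l, x l⟫_ℝ := by
  classical
  set L : ℝ := (Fintype.card n : ℝ)
  set s := √L
  have hL1 : 1 ≤ L := Nat.one_le_cast.mpr (Fintype.card_pos_iff.mpr ⟨l⟩)
  have hs2 : s ^ 2 = L := Real.sq_sqrt (by positivity)
  have hxx : (star x ⬝ᵥ x).re = L := by simp [re_star_dotProduct_self, hx, L]
  have hlam : 0 ≤ lam := by
    have h0 : 0 ≤ (star x ⬝ᵥ A *ᵥ x).re := (Complex.le_def.mp (hA.dotProduct_mulVec_nonneg x)).1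
    nlinarith [hub x]
  have hxl : (starRingEnd ℂ) (x l) * x l = 1 := by
    rw [Complex.conj_mul', hx l]; norm_num
  have h := hA.neg_mul_le_four_mul_re hub x ((s : ℂ) • Pi.single l (x l))
  have hbx : (star ((s : ℂ) • Pi.single l (x l)) ⬝ᵥ A *ᵥ x).re = s * ⟪(A *ᵥ x) l, x l⟫_ℝ := by
    simp [Pi.star_single, single_dotProduct, Complex.inner, mul_comm]
  have hnorm : (star (x - (s : ℂ) • Pi.single l (x l)) ⬝ᵥ (x - (s : ℂ) • Pi.single l (x l))).re
      = L - 2 * s + s ^ 2 := by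
    simp only [star_sub, star_smul, Pi.star_single, sub_dotProduct, dotProduct_sub,
      smul_dotProduct, dotProduct_smul, single_dotProduct, dotProduct_single, Pi.star_apply,
      Pi.sub_apply, Pi.smul_apply, Pi.single_eq_same, Complex.star_def, Complex.conj_ofReal,
      sub_mul, mul_assoc, hxl, smul_eq_mul, mul_one, Complex.sub_re, Complex.re_ofReal_mul, hxx,
      Complex.one_re, Complex.ofReal_re]
    ring
  rw [hbx, hnorm, ← hs2] at h
  rw [← hs2]
  have hs0 : 0 < 4 * s := by positivity
  refine le_of_mul_le_mul_left ?_ hs0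
  nlinarith [mul_nonneg (mul_nonneg hlam hs0.le) (sq_nonneg (s - 2))]

lemma PosSemidef.zero_le_inner_gradient [DecidableEq n] {A : Matrix n n ℂ} (hA : A.PosSemidef)
    {lam : ℝ} (hub : ∀ y, (star y ⬝ᵥ A *ᵥ y).re ≤ lam * (star y ⬝ᵥ y).re) {q : n → ℂ} {γ : ℝ}
    (hγ : (Fintype.card n : ℝ) / 8 * lam + √(∑ i, ‖q i‖ ^ 2) ≤ γ) {x : n → ℂ}
    (hx : ∀ i, ‖x i‖ = 1) (l : n) :
    0 ≤ ⟪2 * ((A + (γ : ℂ) • 1) *ᵥ x) l - 2 * q l, x l⟫_ℝ := by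
  have hw : 2 * ((A + (γ : ℂ) • 1) *ᵥ x) l - 2 * q l
      = (2 : ℝ) • ((A *ᵥ x) l + γ • x l - q l) := by
    simp only [Complex.coe_smul, add_mulVec, smul_mulVec, one_mulVec, Pi.add_apply,
      Pi.smul_apply, Complex.real_smul, Complex.ofReal_ofNat]
    ring
  have hq : ⟪q l, x l⟫_ℝ ≤ √(∑ i, ‖q i‖ ^ 2) := by
    refine (real_inner_le_norm _ _).trans ?_
    rw [hx l, mul_one]
    exact Real.le_sqrt_of_sq_le
      (Finset.single_le_sum (fun i _ => sq_nonneg ‖q i‖) (Finset.mem_univ l))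
  have hAx := hA.neg_card_div_eight_mul_le_inner hub hx l
  rw [hw, real_inner_smul_left, inner_sub_left, inner_add_left, real_inner_smul_left,
    real_inner_self_eq_norm_sq, hx l]
  linarith

lemma re_dotProduct_add_ofReal_smul_one_mulVec [DecidableEq n] (A : Matrix n n ℂ) (γ : ℝ)
    (y : n → ℂ) :
    (star y ⬝ᵥ (A + (γ : ℂ) • 1) *ᵥ y).re = (star y ⬝ᵥ A *ᵥ y).re + γ * (star y ⬝ᵥ y).re := by
  simp [add_mulVec, smul_mulVec, dotProduct_add, dotProduct_smul]

end Matrix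

lemma proj_apply {L : ℕ} (z w : Fin L → ℂ) (l : Fin L) :
    proj z w l = w l - ⟪w l, z l⟫_ℝ • z l := by
  simp [proj, Complex.inner, Complex.real_smul, mul_comm]

lemma retr_apply {L : ℕ} (w : Fin L → ℂ) (l : Fin L) : retr w l = ‖w l‖⁻¹ • w l := by
  simp [retr, Complex.real_smul, div_eq_inv_mul]

lemma norm_retr_apply {L : ℕ} {w : Fin L → ℂ} {l : Fin L} (hw : w l ≠ 0) : ‖retr w l‖ = 1 := by
  rw [retr_apply, norm_smul, norm_inv, norm_norm, inv_mul_cancel₀ (norm_ne_zero_iff.mpr hw)]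

lemma fbar_add {L : ℕ} {R : Matrix (Fin L) (Fin L) ℂ} (hR : R.IsHermitian) (q x d : Fin L → ℂ) :
    fbar R q (x + d) = fbar R q x + (star d ⬝ᵥ R *ᵥ d).re + 2 * (star d ⬝ᵥ (R *ᵥ x - q)).re := by
  have hRx := hR.re_star_dotProduct_mulVec_comm x d
  have hq : (star q ⬝ᵥ d).re = (star d ⬝ᵥ q).re := by
    rw [← Complex.conj_re, ← Complex.star_def, star_dotProduct, star_star]
  simp only [fbar, star_add, mulVec_add, add_dotProduct, dotProduct_add, dotProduct_sub,
    Complex.add_re, Complex.sub_re] at hRx hq ⊢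
  linarith

lemma fbar_le_of_forall_mul_norm_sq_le {L : ℕ} {R : Matrix (Fin L) (Fin L) ℂ} (hR : R.IsHermitian)
    {k : ℝ} (hub : ∀ y, (star y ⬝ᵥ R *ᵥ y).re ≤ k * (star y ⬝ᵥ y).re) (q : Fin L → ℂ)
    {x y : Fin L → ℂ}
    (h : ∀ l, k * ‖y l - x l‖ ^ 2 ≤ -⟪y l - x l, 2 * (R *ᵥ x) l - 2 * q l⟫_ℝ) :
    fbar R q y ≤ fbar R q x := by
  obtain ⟨d, rfl⟩ : ∃ d, y = x + d := ⟨y - x, by abel⟩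
  simp only [Pi.add_apply, add_sub_cancel_left] at h
  have hw : ∀ l, ⟪d l, 2 * (R *ᵥ x) l - 2 * q l⟫_ℝ = 2 * ⟪d l, (R *ᵥ x - q) l⟫_ℝ := fun l => by
    rw [Pi.sub_apply, ← mul_sub, ← real_inner_smul_right, Complex.real_smul, Complex.ofReal_ofNat]
  have hsum : k * (star d ⬝ᵥ d).re ≤ -(2 * (star d ⬝ᵥ (R *ᵥ x - q)).re) := by
    rw [re_star_dotProduct_self, re_star_dotProduct, Finset.mul_sum, Finset.mul_sum,
      ← Finset.sum_neg_distrib]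
    exact Finset.sum_le_sum fun l _ => hw l ▸ h l
  rw [fbar_add hR]
  linarith [hub d]

theorem stmt12_general (L : ℕ) (P : Matrix (Fin L) (Fin L) ℂ)
    (hP : P.PosSemidef)
    (lamP : ℝ)
    (hlamP_ub : ∀ i, hP.isHermitian.eigenvalues i ≤ lamP)
    (q : Fin L → ℂ) (γ : ℝ)
    (hγ : ((L : ℝ) / 8) * lamP + Real.sqrt (∑ l, ‖q l‖ ^ 2) ≤ γ)
    (β : ℝ) (hβ : 0 < β) (hβ' : β < 1 / (lamP + γ)) :
    ∀ x : Fin L → ℂ, (∀ l, ‖x l‖ = 1) →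
      (∀ l, x l + (β : ℂ) *
        proj x (-(fun l' =>
          2 * (P + (γ : ℂ) • (1 : Matrix (Fin L) (Fin L) ℂ)).mulVec x l'
            - 2 * q l')) l ≠ 0) ∧
      (∀ l, ‖
        (retr (fun l' => x l' + (β : ℂ) *
          proj x (-(fun l'' =>
            2 * (P + (γ : ℂ) • (1 : Matrix (Fin L) (Fin L) ℂ)).mulVec x l''
              - 2 * q l'')) l') l)‖ = 1) ∧
      fbar (P + (γ : ℂ) • (1 : Matrix (Fin L) (Fin L) ℂ)) q
        (retr (fun l' => x l' + (β : ℂ) *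
          proj x (-(fun l'' =>
            2 * (P + (γ : ℂ) • (1 : Matrix (Fin L) (Fin L) ℂ)).mulVec x l''
              - 2 * q l'')) l'))
        ≤ fbar (P + (γ : ℂ) • (1 : Matrix (Fin L) (Fin L) ℂ)) q x := by
  intro x hx
  set R := P + (γ : ℂ) • (1 : Matrix (Fin L) (Fin L) ℂ)
  set w : Fin L → ℂ := fun l => 2 * (R *ᵥ x) l - 2 * q l
  have hPub := hP.isHermitian.re_dotProduct_mulVec_le_of_eigenvalues_le hlamP_ub
  have hRub (y : Fin L → ℂ) : (star y ⬝ᵥ R *ᵥ y).re ≤ (lamP + γ) * (star y ⬝ᵥ y).re := by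
    rw [re_dotProduct_add_ofReal_smul_one_mulVec]
    linarith [hPub y]
  have hβk : β * (lamP + γ) ≤ 1 := by
    rcases le_or_gt (lamP + γ) 0 with hk | hk
    · nlinarith
    · exact ((lt_div_iff₀ hk).mp (by simpa using hβ')).le
  have hwx (l : Fin L) : ⟪-w l, x l⟫_ℝ ≤ 0 := by
    rw [inner_neg_left, neg_nonpos]
    exact hP.zero_le_inner_gradient hPub (by simpa using hγ) hx l
  have hstep (l : Fin L) : x l + (β : ℂ) * proj x (-w) l
      = x l + β • (-w l - ⟪-w l, x l⟫_ℝ • x l) := by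
    simp only [proj_apply, Pi.neg_apply, Complex.real_smul]
  have hne (l : Fin L) : x l + (β : ℂ) * proj x (-w) l ≠ 0 := by
    rw [hstep, ← norm_pos_iff]
    exact one_pos.trans_le <| one_le_norm_add_smul_of_inner_eq_zero (hx l)
      (inner_sub_inner_smul_self_eq_zero (hx l) _) β
  refine ⟨hne, fun l => norm_retr_apply (hne l), ?_⟩
  refine fbar_le_of_forall_mul_norm_sq_le (hP.isHermitian.add_ofReal_smul_one γ) hRub q fun l => ?_
  rw [retr_apply, hstep, ← inner_neg_right]
  exact mul_norm_retraction_sub_sq_le_inner (hx l) (hwx l) hβ hβk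

/-- One-step monotonicity of PDR: With `P` Hermitian PSD of
largest eigenvalue `lamP`, `γ ≥ (L/8)·lamP + ‖q‖₂`, `lamP + γ > 0` (the largest
eigenvalue of `P + γI`) and `0 < β < 1/(lamP + γ)`, for every `x ∈ S^L` the PDR
update `x₊ = R(x + β·P_x(−w(x)))` with `w(x) = 2(P+γI)x − 2q` is well defined,
lies in `S^L`, and satisfies `f̄(x₊) ≤ f̄(x)`. -/
theorem stmt12 (L : ℕ) (hL : 0 < L) (P : Matrix (Fin L) (Fin L) ℂ)
    (hP : P.PosSemidef)
    (lamP : ℝ) (hlamP_mem : ∃ i, hP.isHermitian.eigenvalues i = lamP)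
    (hlamP_ub : ∀ i, hP.isHermitian.eigenvalues i ≤ lamP)
    (q : Fin L → ℂ) (γ : ℝ)
    (hγ : ((L : ℝ) / 8) * lamP + Real.sqrt (∑ l, ‖q l‖ ^ 2) ≤ γ)
    (hpos : 0 < lamP + γ)
    (β : ℝ) (hβ : 0 < β) (hβ' : β < 1 / (lamP + γ)) :
    ∀ x : Fin L → ℂ, (∀ l, ‖x l‖ = 1) →
      (∀ l, x l + (β : ℂ) *
        proj x (-(fun l' =>
          2 * (P + (γ : ℂ) • (1 : Matrix (Fin L) (Fin L) ℂ)).mulVec x l'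
            - 2 * q l')) l ≠ 0) ∧
      (∀ l, ‖
        (retr (fun l' => x l' + (β : ℂ) *
          proj x (-(fun l'' =>
            2 * (P + (γ : ℂ) • (1 : Matrix (Fin L) (Fin L) ℂ)).mulVec x l''
              - 2 * q l'')) l') l)‖ = 1) ∧
      fbar (P + (γ : ℂ) • (1 : Matrix (Fin L) (Fin L) ℂ)) q
        (retr (fun l' => x l' + (β : ℂ) *
          proj x (-(fun l'' =>
            2 * (P + (γ : ℂ) • (1 : Matrix (Fin L) (Fin L) ℂ)).mulVec x l''
              - 2 * q l'')) l'))
        ≤ fbar (P + (γ : ℂ) • (1 : Matrix (Fin L) (Fin L) ℂ)) q x :=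
  stmt12_general L P hP lamP hlamP_ub q γ hγ β hβ hβ'
end
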